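/- Let m ≥ 0 and let φ : ℝ_t × (2m, ∞)_r × (0,π)_θ × (0,2π)_φ → ℝ be smooth. Set F(r) = 1 − 2m/r, r_*(r) = r + 2m log(r − 2m) (interpreted as r_* = r when m = 0), and define ψ on {(u, R, θ, φᵃ) : u ∈ ℝ, 0 < R < 1/(2m), θ ∈ (0,π), φᵃ ∈ (0,2π)} by ψ(u, R, θ, φᵃ) = (1/R) φ(u + r_*(1/R), 1/R, θ, φᵃ). Then φ satisfies the wave equation □_g φ = F⁻¹ ∂_t² φ − r⁻² ∂_r( r² F ∂_r φ ) − r⁻² Δ_{S²} φ = 0 if and only if ψ satisfies the rescaled conformal wave equation −2 ∂_u ∂_R ψ − ∂_R( R²(1−2mR) ∂_R ψ ) − Δ_{S²} ψ + 2mR ψ = 0, where Δ_{S²} = (1/sin θ) ∂_θ( sin θ ∂_θ · ) + (1/sin² θ) ∂_φᵃ² is the Laplacian on S² written in spherical coordinates. -/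

import Mathlib

open Real

/-- The Laplacian on `S²` in spherical coordinates `(θ, φ)`:
`Δ_{S²} f = (1/sin θ) ∂_θ(sin θ ∂_θ f) + (1/sin²θ) ∂_φ² f`. -/
noncomputable def laplaceS2 (f : ℝ → ℝ → ℝ) (θ φa : ℝ) : ℝ :=
  (Real.sin θ)⁻¹ * deriv (fun θ' => Real.sin θ' * deriv (fun θ'' => f θ'' φa) θ') θ
    + (Real.sin θ ^ 2)⁻¹ * deriv (fun φ' => deriv (fun φ'' => f θ φ'') φ') φa

/-- The Schwarzschild d'Alembertian
`□_g φ = F⁻¹ ∂_t² φ − r⁻² ∂_r(r² F ∂_r φ) − r⁻² Δ_{S²} φ` with `F = 1 − 2m/r`. -/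
noncomputable def waveOpSchw (m : ℝ) (φ : ℝ → ℝ → ℝ → ℝ → ℝ) (t r θ φa : ℝ) : ℝ :=
  (1 - 2 * m / r)⁻¹ * deriv (fun t' => deriv (fun t'' => φ t'' r θ φa) t') t
    - (r ^ 2)⁻¹ *
        deriv (fun r' => r' ^ 2 * (1 - 2 * m / r') * deriv (fun r'' => φ t r'' θ φa) r') r
    - (r ^ 2)⁻¹ * laplaceS2 (fun θ' φ' => φ t r θ' φ') θ φa

/-- The rescaled conformal wave operator
`−2 ∂_u ∂_R ψ − ∂_R(R²(1−2mR) ∂_R ψ) − Δ_{S²} ψ + 2mR ψ`. -/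
noncomputable def rescaledWaveOp (m : ℝ) (ψ : ℝ → ℝ → ℝ → ℝ → ℝ) (u R θ φa : ℝ) : ℝ :=
  -2 * deriv (fun u' => deriv (fun R' => ψ u' R' θ φa) R) u
    - deriv (fun R' => R' ^ 2 * (1 - 2 * m * R') * deriv (fun R'' => ψ u R'' θ φa) R') R
    - laplaceS2 (fun θ' φ' => ψ u R θ' φ') θ φa
    + 2 * m * R * ψ u R θ φa

/-- The Regge–Wheeler tortoise coordinate `r_* = r + 2m log(r − 2m)`
(equal to `r` when `m = 0`). -/
noncomputable def rstar (m r : ℝ) : ℝ := r + 2 * m * Real.log (r - 2 * m)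

lemma laplaceS2_const_mul (c : ℝ) (f : ℝ → ℝ → ℝ) (θ φa : ℝ) :
    laplaceS2 (fun θ' φ' => c * f θ' φ') θ φa = c * laplaceS2 f θ φa := by
  unfold laplaceS2
  have h1 : (fun θ' => Real.sin θ' * deriv (fun θ'' => c * f θ'' φa) θ')
      = fun θ' => c * (Real.sin θ' * deriv (fun θ'' => f θ'' φa) θ') := by
    funext θ'
    rw [deriv_const_mul_field]; ring
  have h2 : (fun φ' => deriv (fun φ'' => c * f θ φ'') φ')
      = fun φ' => c * deriv (fun φ'' => f θ φ'') φ' := by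
    funext φ'
    rw [deriv_const_mul_field]
  rw [h1, h2, deriv_const_mul_field, deriv_const_mul_field]
  ring

lemma clm_pair (L : ℝ×ℝ →L[ℝ] ℝ) (x y : ℝ) : L (x,y) = x * L (1,0) + y * L (0,1) := by
  have : (x, y) = x • ((1:ℝ),(0:ℝ)) + y • ((0:ℝ),(1:ℝ)) := by simp
  rw [this, map_add, map_smul, map_smul]; simp

lemma clm2_pair (L : ℝ×ℝ →L[ℝ] (ℝ×ℝ →L[ℝ] ℝ)) (x y z w : ℝ) :
    L (x,y) (z,w) = x*z * L (1,0) (1,0) + x*w * L (1,0) (0,1)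
      + y*z * L (0,1) (1,0) + y*w * L (0,1) (0,1) := by
  have h : (x, y) = x • ((1:ℝ),(0:ℝ)) + y • ((0:ℝ),(1:ℝ)) := by simp
  rw [h, map_add, map_smul, map_smul]
  simp only [ContinuousLinearMap.add_apply, ContinuousLinearMap.coe_smul',
    Pi.smul_apply, smul_eq_mul]
  rw [clm_pair (L (1,0)) z w, clm_pair (L (0,1)) z w]
  ring

lemma hasDerivAt_rstar {m r : ℝ} (hm : 0 ≤ m) (hr : 2*m < r) :
    HasDerivAt (rstar m) ((1 - 2*m/r)⁻¹) r := by
  have h0 : r - 2*m ≠ 0 := by linarith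
  have hr0 : r ≠ 0 := by nlinarith
  have h1 : HasDerivAt (fun s : ℝ => s - 2*m) 1 r := by
    simpa using (hasDerivAt_id r).sub_const (2*m)
  have h2 : HasDerivAt (fun s : ℝ => Real.log (s - 2*m)) ((r - 2*m)⁻¹ * 1) r :=
    by have := (Real.hasDerivAt_log h0).comp r h1; exact this
  have h3 : HasDerivAt (rstar m) (1 + 2*m * ((r - 2*m)⁻¹ * 1)) r :=
    (hasDerivAt_id r).add (h2.const_mul (2*m))
  convert h3 using 1
  field_simp
  ring

lemma key (m : ℝ) (hm : 0 ≤ m) (G : ℝ × ℝ → ℝ)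
    (hG : ContDiffOn ℝ (⊤ : ℕ∞) G (Set.univ ×ˢ Set.Ioi (2*m)))
    (h : ℝ → ℝ → ℝ)
    (hh : ∀ u' R', 0 < R' → 2*m*R' < 1 →
      h u' R' = (1/R') * G (u' + rstar m (1/R'), 1/R'))
    (u R : ℝ) (hR : 0 < R) (hmR : 2*m*R < 1) :
    -2 * deriv (fun u' => deriv (fun R' => h u' R') R) u
      - deriv (fun R' => R'^2 * (1 - 2*m*R') * deriv (fun R'' => h u R'') R') R
      + 2*m*R * h u R
    = (1/R)^3 * ((1 - 2*m/(1/R))⁻¹ *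
          deriv (fun t' => deriv (fun t'' => G (t'', 1/R)) t') (u + rstar m (1/R))
        - ((1/R)^2)⁻¹ *
          deriv (fun r' => r'^2 * (1 - 2*m/r')
            * deriv (fun r'' => G (u + rstar m (1/R), r'')) r') (1/R)) := by
  simp only [one_div] at hh ⊢
  -- basic facts
  have hR0 : R ≠ 0 := ne_of_gt hR
  have hF : (0:ℝ) < 1 - 2*m*R := by linarith
  have hF0 : (1 - 2*m*R) ≠ 0 := ne_of_gt hF
  set S : Set (ℝ × ℝ) := Set.univ ×ˢ Set.Ioi (2*m) with hSdef
  have hS : IsOpen S := isOpen_univ.prod isOpen_Ioi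
  have hG' : ContDiffOn ℝ (⊤ : ℕ∞) (fderiv ℝ G) S := hG.fderiv_of_isOpen hS (by simp)
  have hmemS : ∀ t' r' : ℝ, 2*m < r' → (t', r') ∈ S := by
    intro t' r' hr'
    exact Set.mem_prod.2 ⟨Set.mem_univ _, hr'⟩
  have hGd : ∀ q ∈ S, DifferentiableAt ℝ G q := by
    intro q hq
    exact ((hG q hq).contDiffAt (hS.mem_nhds hq)).differentiableAt (by simp)
  have hG'd : ∀ q ∈ S, DifferentiableAt ℝ (fderiv ℝ G) q := by
    intro q hq
    exact ((hG' q hq).contDiffAt (hS.mem_nhds hq)).differentiableAt (by simp)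
  -- slice derivatives of G
  have hslice_t : ∀ t' r' : ℝ, 2*m < r' →
      HasDerivAt (fun s => G (s, r')) (fderiv ℝ G (t', r') (1, 0)) t' := by
    intro t' r' hr'
    have hc : HasDerivAt (fun s : ℝ => (s, r')) ((1:ℝ), (0:ℝ)) t' :=
      (hasDerivAt_id t').prodMk (hasDerivAt_const t' r')
    exact ((hGd _ (hmemS t' r' hr')).hasFDerivAt).comp_hasDerivAt t' hc
  have hslice_r : ∀ t' r' : ℝ, 2*m < r' →
      HasDerivAt (fun s => G (t', s)) (fderiv ℝ G (t', r') (0, 1)) r' := by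
    intro t' r' hr'
    have hc : HasDerivAt (fun s : ℝ => (t', s)) ((0:ℝ), (1:ℝ)) r' :=
      (hasDerivAt_const r' t').prodMk (hasDerivAt_id r')
    exact ((hGd _ (hmemS t' r' hr')).hasFDerivAt).comp_hasDerivAt r' hc
  -- the open set O of admissible R'
  set O : Set ℝ := Set.Ioi 0 ∩ {x : ℝ | 2*m*x < 1} with hOdef
  have hO : IsOpen O :=
    isOpen_Ioi.inter (isOpen_lt (by fun_prop) continuous_const)
  have hRO : R ∈ O := ⟨hR, hmR⟩
  have hinv_gt : ∀ R' : ℝ, R' ∈ O → 2*m < R'⁻¹ := by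
    intro R' hR'
    have hR'p : (0:ℝ) < R' := hR'.1
    rw [← mul_lt_mul_iff_of_pos_right hR'p, inv_mul_cancel₀ (ne_of_gt hR'p)]
    exact hR'.2
  -- derivative of the curve R' ↦ (u' + rstar m R'⁻¹, R'⁻¹)
  have hcurve : ∀ (u' : ℝ) (R' : ℝ), R' ∈ O →
      HasDerivAt (fun s : ℝ => (u' + rstar m s⁻¹, s⁻¹))
        (-((R'^2)⁻¹ * (1 - 2*m*R')⁻¹), -(R'^2)⁻¹) R' := by
    intro u' R' hR'
    have hR'p : (0:ℝ) < R' := hR'.1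
    have hR'0 : R' ≠ 0 := ne_of_gt hR'p
    have h2' : 2*m*R' < 1 := hR'.2
    have hF' : (1:ℝ) - 2*m*R' ≠ 0 := sub_ne_zero_of_ne (ne_of_gt h2')
    have hinv : HasDerivAt (fun s : ℝ => s⁻¹) (-(R'^2)⁻¹) R' := hasDerivAt_inv hR'0
    have hrs : HasDerivAt (fun s : ℝ => rstar m s⁻¹)
        ((1 - 2*m/(R'⁻¹))⁻¹ * (-(R'^2)⁻¹)) R' :=
      (hasDerivAt_rstar hm (hinv_gt R' hR')).comp R' hinv
    have hrs' : HasDerivAt (fun s : ℝ => u' + rstar m s⁻¹)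
        (-((R'^2)⁻¹ * (1 - 2*m*R')⁻¹)) R' := by
      have := hrs.const_add u'
      refine this.congr_deriv ?_
      rw [div_eq_mul_inv, inv_inv]
      ring
    exact hrs'.prodMk hinv
  -- derivative in R of h u' ·
  have hder : ∀ (u' : ℝ) (R' : ℝ), R' ∈ O →
      HasDerivAt (fun s => h u' s)
        (-(R'^2)⁻¹ * G (u' + rstar m R'⁻¹, R'⁻¹)
          + R'⁻¹ * (fderiv ℝ G (u' + rstar m R'⁻¹, R'⁻¹)
              (-((R'^2)⁻¹ * (1 - 2*m*R')⁻¹), -(R'^2)⁻¹))) R' := by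
    intro u' R' hR'
    have hR'0 : R' ≠ 0 := ne_of_gt hR'.1
    have hmem : (u' + rstar m R'⁻¹, R'⁻¹) ∈ S := hmemS _ _ (hinv_gt R' hR')
    have hGγ : HasDerivAt (fun s : ℝ => G (u' + rstar m s⁻¹, s⁻¹))
        (fderiv ℝ G (u' + rstar m R'⁻¹, R'⁻¹)
          (-((R'^2)⁻¹ * (1 - 2*m*R')⁻¹), -(R'^2)⁻¹)) R' :=
      ((hGd _ hmem).hasFDerivAt).comp_hasDerivAt R' (hcurve u' R' hR')
    have hmul : HasDerivAt (fun s : ℝ => s⁻¹ * G (u' + rstar m s⁻¹, s⁻¹))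
        (-(R'^2)⁻¹ * G (u' + rstar m R'⁻¹, R'⁻¹)
          + R'⁻¹ * (fderiv ℝ G (u' + rstar m R'⁻¹, R'⁻¹)
              (-((R'^2)⁻¹ * (1 - 2*m*R')⁻¹), -(R'^2)⁻¹))) R' :=
      (hasDerivAt_inv hR'0).mul hGγ
    refine hmul.congr_of_eventuallyEq ?_
    filter_upwards [hO.mem_nhds hR'] with x hx
    exact hh u' x hx.1 hx.2
  -- point p and vector v
  have hrgtR : 2*m < R⁻¹ := hinv_gt R hRO
  have hmem_p : (u + rstar m R⁻¹, R⁻¹) ∈ S := hmemS _ _ hrgtR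
  have hG'p : DifferentiableAt ℝ (fderiv ℝ G) (u + rstar m R⁻¹, R⁻¹) := hG'd _ hmem_p
  -- Term 1 : mixed u,R derivative
  have hT1fun : (fun u' => deriv (fun R' => h u' R') R) = fun u' =>
      -(R^2)⁻¹ * G (u' + rstar m R⁻¹, R⁻¹)
        + R⁻¹ * (fderiv ℝ G (u' + rstar m R⁻¹, R⁻¹)
            (-((R^2)⁻¹ * (1 - 2*m*R)⁻¹), -(R^2)⁻¹)) :=
    funext fun u' => (hder u' R hRO).deriv
  have hcu : HasDerivAt (fun u' : ℝ => (u' + rstar m R⁻¹, R⁻¹)) ((1:ℝ), (0:ℝ)) u :=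
    ((hasDerivAt_id u).add_const _).prodMk (hasDerivAt_const _ _)
  have hA : HasDerivAt (fun u' => G (u' + rstar m R⁻¹, R⁻¹))
      (fderiv ℝ G (u + rstar m R⁻¹, R⁻¹) (1, 0)) u :=
    ((hGd _ hmem_p).hasFDerivAt).comp_hasDerivAt u hcu
  have hB : HasDerivAt (fun u' => fderiv ℝ G (u' + rstar m R⁻¹, R⁻¹))
      (fderiv ℝ (fderiv ℝ G) (u + rstar m R⁻¹, R⁻¹) (1, 0)) u :=
    (hG'p.hasFDerivAt).comp_hasDerivAt u hcu
  have hBv := hB.clm_apply (hasDerivAt_const u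
      ((-((R^2)⁻¹ * (1 - 2*m*R)⁻¹), -(R^2)⁻¹) : ℝ × ℝ))
  have hT1 := (hA.const_mul (-(R^2)⁻¹)).add (hBv.const_mul R⁻¹)
  have eT1 : deriv (fun u' => deriv (fun R' => h u' R') R) u
      = -(R^2)⁻¹ * fderiv ℝ G (u + rstar m R⁻¹, R⁻¹) (1, 0)
        + R⁻¹ * (fderiv ℝ (fderiv ℝ G) (u + rstar m R⁻¹, R⁻¹) (1, 0)
              (-((R^2)⁻¹ * (1 - 2*m*R)⁻¹), -(R^2)⁻¹)
            + fderiv ℝ G (u + rstar m R⁻¹, R⁻¹) 0) := by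
    rw [hT1fun]; exact hT1.deriv
  -- Term 2 : the radial derivative
  have hpow : HasDerivAt (fun x : ℝ => x^2) ((2:ℕ) * R^(2-1)) R := hasDerivAt_pow 2 R
  have hpowinv : HasDerivAt (fun x : ℝ => (x^2)⁻¹)
      (-((2:ℕ) * R^(2-1)) / (R^2)^2) R := hpow.inv (pow_ne_zero 2 hR0)
  have hGγR : HasDerivAt (fun s : ℝ => G (u + rstar m s⁻¹, s⁻¹))
      (fderiv ℝ G (u + rstar m R⁻¹, R⁻¹)
        (-((R^2)⁻¹ * (1 - 2*m*R)⁻¹), -(R^2)⁻¹)) R :=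
    ((hGd _ hmem_p).hasFDerivAt).comp_hasDerivAt R (hcurve u R hRO)
  have hprod1 := (hpowinv.neg).mul hGγR
  have hFinv : HasDerivAt (fun s : ℝ => (1 - 2*m*s)⁻¹)
      (-(-(2*m*1)) / (1-2*m*R)^2) R :=
    (((hasDerivAt_id R).const_mul (2*m)).const_sub 1).inv hF0
  have hdt := (hpowinv.mul hFinv).neg
  have hvfun := hdt.prodMk (hpowinv.neg)
  have hclm : HasDerivAt (fun s : ℝ => fderiv ℝ G (u + rstar m s⁻¹, s⁻¹))
      (fderiv ℝ (fderiv ℝ G) (u + rstar m R⁻¹, R⁻¹)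
        (-((R^2)⁻¹ * (1 - 2*m*R)⁻¹), -(R^2)⁻¹)) R :=
    (hG'p.hasFDerivAt).comp_hasDerivAt R (hcurve u R hRO)
  have happly := hclm.clm_apply hvfun
  have hprod2 := (hasDerivAt_inv hR0).mul happly
  have hW := hprod1.add hprod2
  have hpoly : HasDerivAt (fun s : ℝ => s^2 * (1 - 2*m*s))
      ((2:ℕ) * R^(2-1) * (1 - 2*m*R) + R^2 * (-(2*m*1))) R :=
    hpow.mul (((hasDerivAt_id R).const_mul (2*m)).const_sub 1)
  have hT2' := hpoly.mul hW
  have heq2 : (fun R' => R'^2 * (1 - 2*m*R') * deriv (fun R'' => h u R'') R')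
      =ᶠ[nhds R] (fun s : ℝ => s^2 * (1 - 2*m*s) *
        (-(s^2)⁻¹ * G (u + rstar m s⁻¹, s⁻¹)
          + s⁻¹ * (fderiv ℝ G (u + rstar m s⁻¹, s⁻¹)
              (-((s^2)⁻¹ * (1 - 2*m*s)⁻¹), -(s^2)⁻¹)))) := by
    filter_upwards [hO.mem_nhds hRO] with x hx
    rw [(hder u x hx).deriv]
  have eT2 := (hT2'.congr_of_eventuallyEq heq2).deriv
  -- RHS: double t derivative
  have htt_fun : (fun t' => deriv (fun t'' => G (t'', R⁻¹)) t')
      = fun t' => fderiv ℝ G (t', R⁻¹) (1, 0) :=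
    funext fun t' => (hslice_t t' R⁻¹ hrgtR).deriv
  have hcu2 : HasDerivAt (fun t' : ℝ => (t', R⁻¹)) ((1:ℝ), (0:ℝ)) (u + rstar m R⁻¹) :=
    (hasDerivAt_id _).prodMk (hasDerivAt_const _ _)
  have hcl2 : HasDerivAt (fun t' : ℝ => fderiv ℝ G (t', R⁻¹))
      (fderiv ℝ (fderiv ℝ G) (u + rstar m R⁻¹, R⁻¹) (1, 0)) (u + rstar m R⁻¹) :=
    (hG'p.hasFDerivAt).comp_hasDerivAt (u + rstar m R⁻¹) hcu2
  have htt := hcl2.clm_apply (hasDerivAt_const (u + rstar m R⁻¹) (((1:ℝ), (0:ℝ)) : ℝ × ℝ))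
  have ett : deriv (fun t' => deriv (fun t'' => G (t'', R⁻¹)) t') (u + rstar m R⁻¹)
      = fderiv ℝ (fderiv ℝ G) (u + rstar m R⁻¹, R⁻¹) (1, 0) (1, 0)
        + fderiv ℝ G (u + rstar m R⁻¹, R⁻¹) 0 := by
    rw [htt_fun]; exact htt.deriv
  -- RHS: radial part
  have hrinv0 : (R:ℝ)⁻¹ ≠ 0 := inv_ne_zero hR0
  have hpowr : HasDerivAt (fun x : ℝ => x^2) ((2:ℕ) * (R⁻¹)^(2-1)) R⁻¹ := hasDerivAt_pow 2 R⁻¹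
  have hsubr : HasDerivAt (fun s : ℝ => 1 - 2*m*s⁻¹)
      (-(2*m * -((R⁻¹)^2)⁻¹)) R⁻¹ :=
    ((hasDerivAt_inv hrinv0).const_mul (2*m)).const_sub 1
  have hpoly2 := hpowr.mul hsubr
  have hcur : HasDerivAt (fun r' : ℝ => (u + rstar m R⁻¹, r')) ((0:ℝ), (1:ℝ)) R⁻¹ :=
    (hasDerivAt_const _ _).prodMk (hasDerivAt_id _)
  have hclr : HasDerivAt (fun r' : ℝ => fderiv ℝ G (u + rstar m R⁻¹, r'))
      (fderiv ℝ (fderiv ℝ G) (u + rstar m R⁻¹, R⁻¹) (0, 1)) R⁻¹ :=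
    (hG'p.hasFDerivAt).comp_hasDerivAt R⁻¹ hcur
  have happr := hclr.clm_apply (hasDerivAt_const (R⁻¹ : ℝ) (((0:ℝ), (1:ℝ)) : ℝ × ℝ))
  have hrr' := hpoly2.mul happr
  have heqr : (fun r' => r'^2 * (1 - 2*m/r')
        * deriv (fun r'' => G (u + rstar m R⁻¹, r'')) r')
      =ᶠ[nhds R⁻¹] (fun r' : ℝ => r'^2 * (1 - 2*m*r'⁻¹)
        * fderiv ℝ G (u + rstar m R⁻¹, r') (0, 1)) := by
    filter_upwards [isOpen_Ioi.mem_nhds hrgtR] with x hx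
    rw [(hslice_r _ x hx).deriv, div_eq_mul_inv]
  have err := (hrr'.congr_of_eventuallyEq heqr).deriv
  -- rewrite goal
  rw [eT1, eT2, ett, err, hh u R hR hmR]
  -- abbreviations
  set a0 := G (u + rstar m R⁻¹, R⁻¹) with ha0
  set at1 := fderiv ℝ G (u + rstar m R⁻¹, R⁻¹) (1, 0) with hat1
  set ar1 := fderiv ℝ G (u + rstar m R⁻¹, R⁻¹) (0, 1) with har1
  set btt := fderiv ℝ (fderiv ℝ G) (u + rstar m R⁻¹, R⁻¹) (1, 0) (1, 0) with hbtt
  set btr := fderiv ℝ (fderiv ℝ G) (u + rstar m R⁻¹, R⁻¹) (1, 0) (0, 1) with hbtr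
  set brt := fderiv ℝ (fderiv ℝ G) (u + rstar m R⁻¹, R⁻¹) (0, 1) (1, 0) with hbrt
  set brr := fderiv ℝ (fderiv ℝ G) (u + rstar m R⁻¹, R⁻¹) (0, 1) (0, 1) with hbrr
  have E1 : ∀ z w : ℝ, fderiv ℝ G (u + rstar m R⁻¹, R⁻¹) (z, w) = z * at1 + w * ar1 := by
    intro z w; rw [hat1, har1]; exact clm_pair _ z w
  have E2 : ∀ z w z' w' : ℝ, fderiv ℝ (fderiv ℝ G) (u + rstar m R⁻¹, R⁻¹) (z, w) (z', w')
      = z*z' * btt + z*w' * btr + w*z' * brt + w*w' * brr := by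
    intro z w z' w'; rw [hbtt, hbtr, hbrt, hbrr]; exact clm2_pair _ z w z' w'
  have hsym : btr = brt := by
    rw [hbtr, hbrt]
    have hcd : ContDiffAt ℝ (⊤ : ℕ∞) G (u + rstar m R⁻¹, R⁻¹) :=
      (hG _ hmem_p).contDiffAt (hS.mem_nhds hmem_p)
    exact (hcd.isSymmSndFDerivAt (by rw [minSmoothness_of_isRCLikeNormedField]; exact WithTop.coe_le_coe.mpr (le_top : (2:ℕ∞) ≤ ⊤))) (1, 0) (0, 1)
  simp only [map_zero, add_zero, Pi.mul_apply, Pi.neg_apply, Pi.add_apply, Prod.fst_zero, Prod.snd_zero, E1, E2, hsym, ← ha0]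
  have h2mr : 2*m/R⁻¹ = 2*m*R := by field_simp
  rw [h2mr]
  have hF1 : (1:ℝ) - 2*R*m ≠ 0 := ne_of_gt (by linarith)
  simp only [Nat.cast_ofNat, Nat.add_one_sub_one, pow_one]
  field_simp
  ring

lemma bridge (m : ℝ) (hm : 0 ≤ m) (φ : ℝ → ℝ → ℝ → ℝ → ℝ)
    (hsmooth : ContDiffOn ℝ (⊤ : ℕ∞) (fun p : ℝ × ℝ × ℝ × ℝ => φ p.1 p.2.1 p.2.2.1 p.2.2.2)
      (Set.univ ×ˢ Set.Ioi (2 * m) ×ˢ Set.Ioo 0 π ×ˢ Set.Ioo 0 (2 * π)))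
    (ψ : ℝ → ℝ → ℝ → ℝ → ℝ)
    (hψ : ∀ u R θ φa, 0 < R → 2 * m * R < 1 →
      ψ u R θ φa = (1 / R) * φ (u + rstar m (1 / R)) (1 / R) θ φa)
    (u R θ φa : ℝ) (hR : 0 < R) (hmR : 2 * m * R < 1)
    (hθ : θ ∈ Set.Ioo 0 π) (hφ : φa ∈ Set.Ioo 0 (2 * π)) :
    rescaledWaveOp m ψ u R θ φa
      = (1/R)^3 * waveOpSchw m φ (u + rstar m (1/R)) (1/R) θ φa := by
  have hR0 : R ≠ 0 := ne_of_gt hR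
  have hGsm : ContDiffOn ℝ (⊤ : ℕ∞) (fun q : ℝ × ℝ => φ q.1 q.2 θ φa)
      (Set.univ ×ˢ Set.Ioi (2*m)) := by
    have hmap : ContDiff ℝ (⊤ : ℕ∞) (fun q : ℝ × ℝ => ((q.1, q.2, θ, φa) : ℝ × ℝ × ℝ × ℝ)) := by
      fun_prop
    exact hsmooth.comp hmap.contDiffOn (fun q hq => by
      refine Set.mem_prod.2 ⟨Set.mem_univ _, Set.mem_prod.2 ⟨hq.2, Set.mem_prod.2 ⟨hθ, hφ⟩⟩⟩)
  have hkey :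
      -2 * deriv (fun u' => deriv (fun R' => ψ u' R' θ φa) R) u
        - deriv (fun R' => R'^2 * (1 - 2*m*R') * deriv (fun R'' => ψ u R'' θ φa) R') R
        + 2*m*R * ψ u R θ φa
      = (1/R)^3 * ((1 - 2*m/(1/R))⁻¹ *
            deriv (fun t' => deriv (fun t'' => φ t'' (1/R) θ φa) t') (u + rstar m (1/R))
          - ((1/R)^2)⁻¹ *
            deriv (fun r' => r'^2 * (1 - 2*m/r')
              * deriv (fun r'' => φ (u + rstar m (1/R)) r'' θ φa) r') (1/R)) :=
    key m hm (fun q : ℝ × ℝ => φ q.1 q.2 θ φa) hGsm (fun u' R' => ψ u' R' θ φa)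
      (fun u' R' h1 h2 => hψ u' R' θ φa h1 h2) u R hR hmR
  have hlap : laplaceS2 (fun θ' φ' => ψ u R θ' φ') θ φa
      = (1/R) * laplaceS2 (fun θ' φ' => φ (u + rstar m (1/R)) (1/R) θ' φ') θ φa := by
    have hfeq : (fun θ' φ' => ψ u R θ' φ')
        = fun θ' φ' => (1/R) * φ (u + rstar m (1/R)) (1/R) θ' φ' :=
      funext fun θ' => funext fun φ' => hψ u R θ' φ' hR hmR
    rw [hfeq, laplaceS2_const_mul]
  have hx : ((1/R : ℝ))^3 * ((1/R)^2)⁻¹ = 1/R := by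
    field_simp
  unfold rescaledWaveOp waveOpSchw
  rw [hlap]
  linear_combination hkey
    + (laplaceS2 (fun θ' φ' => φ (u + rstar m (1/R)) (1/R) θ' φ') θ φa) * hx

theorem stmt_8 (m : ℝ) (hm : 0 ≤ m) (φ : ℝ → ℝ → ℝ → ℝ → ℝ)
    (hsmooth : ContDiffOn ℝ (⊤ : ℕ∞) (fun p : ℝ × ℝ × ℝ × ℝ => φ p.1 p.2.1 p.2.2.1 p.2.2.2)
      (Set.univ ×ˢ Set.Ioi (2 * m) ×ˢ Set.Ioo 0 π ×ˢ Set.Ioo 0 (2 * π)))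
    (ψ : ℝ → ℝ → ℝ → ℝ → ℝ)
    (hψ : ∀ u R θ φa, 0 < R → 2 * m * R < 1 →
      ψ u R θ φa = (1 / R) * φ (u + rstar m (1 / R)) (1 / R) θ φa) :
    (∀ t r θ φa, 2 * m < r → θ ∈ Set.Ioo 0 π → φa ∈ Set.Ioo 0 (2 * π) →
        waveOpSchw m φ t r θ φa = 0) ↔
    (∀ u R θ φa, 0 < R → 2 * m * R < 1 → θ ∈ Set.Ioo 0 π → φa ∈ Set.Ioo 0 (2 * π) →
        rescaledWaveOp m ψ u R θ φa = 0) := by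
  constructor
  · intro H u R θ φa hR hmR hθ hφ
    rw [bridge m hm φ hsmooth ψ hψ u R θ φa hR hmR hθ hφ]
    have hr : 2*m < 1/R := by rw [lt_div_iff₀ hR]; linarith
    rw [H _ _ _ _ hr hθ hφ, mul_zero]
  · intro H t r θ φa hr hθ hφ
    have hr0 : (0:ℝ) < r := lt_of_le_of_lt (by linarith) hr
    have hR : (0:ℝ) < 1/r := by positivity
    have hmR : 2*m*(1/r) < 1 := by
      rw [mul_one_div, div_lt_one hr0]; exact hr
    have hb := bridge m hm φ hsmooth ψ hψ (t - rstar m r) (1/r) θ φa hR hmR hθ hφ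
    rw [one_div_one_div, sub_add_cancel] at hb
    rw [H _ _ _ _ hR hmR hθ hφ] at hb
    have hr3 : (r:ℝ)^3 ≠ 0 := pow_ne_zero _ (ne_of_gt hr0)
    have := hb.symm
    rcases mul_eq_zero.mp this with h' | h'
    · exact absurd h' hr3
    · exact h'
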